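/- Consider the Boston mechanism game on S ∪ C where students in N ⊆ S are sincere (must report truthfully) and students in M = S \ N are sophisticated (may report anything). Then in the associated tiered economy, any two stable matchings assign every sincere student to the same college; equivalently, the college allocation of any sincere student is the same across all Nash equilibria of this game. (Pathak–Sönmez 2008.) -/
import Mathlib


/-! Many-to-one matching framework (students `S` and colleges `C`).

Each student has a strict preference order over `C ∪ {∅}` and each college a
strict (responsive) ranking of `S ∪ {∅}`, both encoded by injective rank
functions into `ℕ` (larger = more preferred); `none` is the outside option.
A matching is a function `μ : S → Option C`; the set of students assigned to a
college is recovered by `assignedSet`. -/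

variable {S C : Type*} [Fintype S] [Fintype C] [DecidableEq S] [DecidableEq C]

def assignedSet (μ : S → Option C) (c : C) [Fintype S] [DecidableEq S] [DecidableEq C] :
    Finset S :=
  Finset.univ.filter (fun s => μ s = some c)

structure MPrefs (S C : Type*) where
  prS : S → Option C → ℕ
  prC : C → Option S → ℕ
  injS : ∀ s, Function.Injective (prS s)
  injC : ∀ c, Function.Injective (prC c)

def MIndivRational (P : MPrefs S C) (q : C → ℕ) (μ : S → Option C) : Prop :=
  (∀ s c, μ s = some c → P.prS s none < P.prS s (some c) ∧ P.prC c none < P.prC c (some s)) ∧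
  ∀ c, (assignedSet μ c).card ≤ q c

def MBlocks (P : MPrefs S C) (q : C → ℕ) (μ : S → Option C) (s : S) (c : C) : Prop :=
  P.prS s (μ s) < P.prS s (some c) ∧
  ((∃ s' ∈ assignedSet μ c, P.prC c (some s') < P.prC c (some s)) ∨
   (P.prC c none < P.prC c (some s) ∧ (assignedSet μ c).card < q c))

def MStable (P : MPrefs S C) (q : C → ℕ) (μ : S → Option C) : Prop :=
  MIndivRational P q μ ∧ ∀ s c, ¬ MBlocks P q μ s c


/-- The rank (1 = most preferred) of college `c` on student `s`'s list. -/
def rankOf (P : MPrefs S C) (s : S) (c : C) : ℕ :=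
  (Finset.univ.filter (fun c' : C => P.prS s (some c) < P.prS s (some c'))).card + 1

/-- Tier of student `s` at college `c` in the Pathak–Sönmez tiered economy:
sophisticated students (those not in `N`) are in tier 1, and a sincere student
is in the tier given by the rank of `c` on her (truthfully reported) list. -/
def tier (N : Finset S) (P : MPrefs S C) (s : S) (c : C) : ℕ :=
  if s ∈ N then rankOf P s c else 1

set_option linter.unusedSectionVars false

open Finset

lemma mem_assignedSet {μ : S → Option C} {c : C} {s : S} :
    s ∈ assignedSet μ c ↔ μ s = some c := by simp [assignedSet]

lemma rankOf_pos (P : MPrefs S C) (s : S) (c : C) : 1 ≤ rankOf P s c :=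
  Nat.le_add_left 1 _

lemma rankOf_lt_rankOf (P : MPrefs S C) {s : S} {c c' : C}
    (h : P.prS s (some c') < P.prS s (some c)) : rankOf P s c < rankOf P s c' := by
  have hss : (univ.filter (fun x : C => P.prS s (some c) < P.prS s (some x))) ⊂
      (univ.filter (fun x : C => P.prS s (some c') < P.prS s (some x))) := by
    refine (Finset.ssubset_iff_of_subset ?_).mpr ?_
    · intro x hx
      simp only [mem_filter, mem_univ, true_and] at hx ⊢
      exact h.trans hx
    · exact ⟨c, by simp [h], by simp⟩
  have := Finset.card_lt_card hss
  unfold rankOf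
  omega

set_option maxHeartbeats 1000000 in
lemma psKey (N : Finset S) (P P' : MPrefs S C) (q : C → ℕ)
    (hsame : ∀ s x, P'.prS s x = P.prS s x)
    (htier : ∀ c (s s' : S), tier N P s c < tier N P s' c →
      P'.prC c (some s') < P'.prC c (some s))
    (μ ν : S → Option C) (hμ : MStable P' q μ) (hν : MStable P' q ν)
    (i : S) (hiN : i ∈ N) (c : C) (hic : μ i = some c)
    (hpref : P.prS i (ν i) < P.prS i (some c))
    (hmin : ∀ j ∈ N, ∀ c' : C,
      ((μ j = some c' ∧ P.prS j (ν j) < P.prS j (some c')) ∨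
       (ν j = some c' ∧ P.prS j (μ j) < P.prS j (some c'))) →
      rankOf P i c ≤ rankOf P j c') : False := by
  classical
  set k := rankOf P i c with hk
  -- generic consequences of stability (no blocking)
  have hstab : ∀ (m : S → Option C), MStable P' q m → ∀ (a : S) (c' : C),
      P.prS a (m a) < P.prS a (some c') → P'.prC c' none < P'.prC c' (some a) →
      (∀ s' : S, m s' = some c' → P'.prC c' (some a) < P'.prC c' (some s')) ∧
      q c' ≤ (assignedSet m c').card := by
    intro m hm a c' hp hacc'
    have hp' : P'.prS a (m a) < P'.prS a (some c') := by rw [hsame, hsame]; exact hp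
    have hma : m a ≠ some c' := by
      intro h; rw [h] at hp'; exact lt_irrefl _ hp'
    have hnb := hm.2 a c'
    rw [MBlocks] at hnb
    push_neg at hnb
    obtain ⟨h1, h2⟩ := hnb hp'
    constructor
    · intro s' hs'
      have hle := h1 s' (mem_assignedSet.mpr hs')
      rcases lt_or_eq_of_le hle with h | h
      · exact h
      · exfalso
        have := P'.injC c' h
        injection this with h'
        rw [h'] at hma
        exact hma hs'
    · exact h2 hacc'
  have hcross : ∀ (a b : S) (c' : C), μ a = some c' → P.prS a (ν a) < P.prS a (some c') →
      ν b = some c' → μ b ≠ some c' → P.prS b (μ b) < P.prS b (some c') → False := by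
    intro a b c' hmua hpa hnbb hmb hpb
    have hacca : P'.prC c' none < P'.prC c' (some a) := (hμ.1.1 a c' hmua).2
    have haccb : P'.prC c' none < P'.prC c' (some b) := (hν.1.1 b c' hnbb).2
    have h1 := (hstab ν hν a c' hpa hacca).1 b hnbb
    have h2 := (hstab μ hμ b c' hpb haccb).1 a hmua
    exact lt_asymm h1 h2
  set T : Finset S := univ.filter
    (fun t => t ∉ N ∧ ∃ c'' : C, μ t = some c'' ∧ P.prS t (ν t) < P.prS t (some c'')) with hT
  set Cs : Finset C := univ.filter (fun c' => c' = c ∨ ∃ t ∈ T, μ t = some c') with hCs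
  have hwit : ∀ c' ∈ Cs, ∃ a : S, μ a = some c' ∧ P.prS a (ν a) < P.prS a (some c') ∧
      tier N P a c' ≤ k := by
    intro c' hc'
    rw [hCs, mem_filter] at hc'
    rcases hc'.2 with rfl | ⟨t, ht, hmt⟩
    · exact ⟨i, hic, hpref, by simp [tier, hiN, hk]⟩
    · rw [hT, mem_filter] at ht
      obtain ⟨_, htN, c'', h1, h2⟩ := ht
      have hEq : c' = c'' := by
        rw [hmt] at h1
        exact Option.some_injective _ h1
      subst hEq
      refine ⟨t, hmt, h2, ?_⟩
      have : tier N P t c' = 1 := by simp [tier, htN]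
      rw [this]
      exact le_trans (rankOf_pos P i c) (le_of_eq hk.symm)
  have hsub : ∀ c' ∈ Cs, ∀ b : S, ν b = some c' → μ b ≠ some c' → b ∈ T := by
    intro c' hc' b hνb hμb
    obtain ⟨a, hma, hpa, hta⟩ := hwit c' hc'
    have hacca := (hμ.1.1 a c' hma).2
    have hab : P'.prC c' (some a) < P'.prC c' (some b) :=
      (hstab ν hν a c' hpa hacca).1 b hνb
    have htb : tier N P b c' ≤ tier N P a c' := by
      by_contra hlt
      push_neg at hlt
      exact lt_asymm hab (htier c' a b hlt)
    have hne : P.prS b (μ b) ≠ P.prS b (some c') := fun h => hμb (P.injS b h)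
    rcases lt_or_gt_of_ne hne with hlt | hgt
    · exact absurd (hcross a b c' hma hpa hνb hμb hlt) not_false
    · obtain ⟨c'', hbc''⟩ : ∃ c'', μ b = some c'' := by
        cases hmb : μ b with
        | none =>
          exfalso
          have hir : P'.prS b none < P'.prS b (some c') := (hν.1.1 b c' hνb).1
          rw [hsame, hsame] at hir
          rw [hmb] at hgt
          exact lt_asymm hir hgt
        | some x => exact ⟨x, rfl⟩
      have hgt' : P.prS b (some c') < P.prS b (some c'') := by rw [hbc''] at hgt; exact hgt
      by_cases hbN : b ∈ N
      · exfalso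
        have h1 : k ≤ rankOf P b c'' :=
          hmin b hbN c'' (Or.inl ⟨hbc'', by rw [hνb]; exact hgt'⟩)
        have h2 : rankOf P b c'' < rankOf P b c' := rankOf_lt_rankOf P hgt'
        have h3 : rankOf P b c' = tier N P b c' := by simp [tier, hbN]
        omega
      · rw [hT, mem_filter]
        exact ⟨mem_univ b, hbN, c'', hbc'', by rw [hνb]; exact hgt'⟩
  have hcard : ∀ c' ∈ Cs, (assignedSet μ c').card ≤ (assignedSet ν c').card := by
    intro c' hc'
    obtain ⟨a, hma, hpa, _⟩ := hwit c' hc'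
    have hacca := (hμ.1.1 a c' hma).2
    exact le_trans (hμ.1.2 c') ((hstab ν hν a c' hpa hacca).2)
  have hdisjν : ∀ c₁ ∈ Cs, ∀ c₂ ∈ Cs, c₁ ≠ c₂ →
      Disjoint (assignedSet ν c₁ \ assignedSet μ c₁) (assignedSet ν c₂ \ assignedSet μ c₂) := by
    intro c₁ _ c₂ _ hne12
    rw [Finset.disjoint_left]
    intro x hx1 hx2
    have h1 : ν x = some c₁ := mem_assignedSet.mp (mem_sdiff.mp hx1).1
    have h2 : ν x = some c₂ := mem_assignedSet.mp (mem_sdiff.mp hx2).1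
    rw [h1] at h2
    exact hne12 (by injection h2)
  have hdisjμ : ∀ c₁ ∈ Cs, ∀ c₂ ∈ Cs, c₁ ≠ c₂ →
      Disjoint (assignedSet μ c₁ \ assignedSet ν c₁) (assignedSet μ c₂ \ assignedSet ν c₂) := by
    intro c₁ _ c₂ _ hne12
    rw [Finset.disjoint_left]
    intro x hx1 hx2
    have h1 : μ x = some c₁ := mem_assignedSet.mp (mem_sdiff.mp hx1).1
    have h2 : μ x = some c₂ := mem_assignedSet.mp (mem_sdiff.mp hx2).1
    rw [h1] at h2
    exact hne12 (by injection h2)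
  have hupper : ∑ c' ∈ Cs, (assignedSet ν c' \ assignedSet μ c').card ≤ T.card := by
    rw [← Finset.card_biUnion hdisjν]
    apply Finset.card_le_card
    intro x hx
    obtain ⟨c', hc', hx⟩ := Finset.mem_biUnion.mp hx
    have h := mem_sdiff.mp hx
    exact hsub c' hc' x (mem_assignedSet.mp h.1) (fun hh => h.2 (mem_assignedSet.mpr hh))
  have hiT : i ∉ T := by
    rw [hT, mem_filter]
    intro h
    exact h.2.1 hiN
  have hlower : T.card + 1 ≤ ∑ c' ∈ Cs, (assignedSet μ c' \ assignedSet ν c').card := by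
    have hins : insert i T ⊆ Cs.biUnion (fun c' => assignedSet μ c' \ assignedSet ν c') := by
      intro x hx
      rcases Finset.mem_insert.mp hx with rfl | hxT
      · apply Finset.mem_biUnion.mpr
        refine ⟨c, by rw [hCs, mem_filter]; exact ⟨mem_univ c, Or.inl rfl⟩, ?_⟩
        rw [mem_sdiff, mem_assignedSet, mem_assignedSet]
        exact ⟨hic, fun h => by rw [h] at hpref; exact lt_irrefl _ hpref⟩
      · have hx' := hxT
        rw [hT, mem_filter] at hx'
        obtain ⟨_, hxN, c'', hmc, hpc⟩ := hx'
        apply Finset.mem_biUnion.mpr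
        refine ⟨c'', by rw [hCs, mem_filter]; exact ⟨mem_univ c'', Or.inr ⟨x, hxT, hmc⟩⟩, ?_⟩
        rw [mem_sdiff, mem_assignedSet, mem_assignedSet]
        exact ⟨hmc, fun h => by rw [h] at hpc; exact lt_irrefl _ hpc⟩
    calc T.card + 1 = (insert i T).card := (Finset.card_insert_of_notMem hiT).symm
      _ ≤ (Cs.biUnion (fun c' => assignedSet μ c' \ assignedSet ν c')).card :=
          Finset.card_le_card hins
      _ = ∑ c' ∈ Cs, (assignedSet μ c' \ assignedSet ν c').card :=
          Finset.card_biUnion hdisjμ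
  have hmono : ∀ c' ∈ Cs, (assignedSet μ c' \ assignedSet ν c').card ≤
      (assignedSet ν c' \ assignedSet μ c').card := by
    intro c' hc'
    have h := hcard c' hc'
    have e1 := Finset.card_sdiff_add_card_inter (assignedSet μ c') (assignedSet ν c')
    have e2 := Finset.card_sdiff_add_card_inter (assignedSet ν c') (assignedSet μ c')
    have e3 : (assignedSet μ c' ∩ assignedSet ν c').card
        = (assignedSet ν c' ∩ assignedSet μ c').card := by rw [Finset.inter_comm]
    omega
  have hsum := Finset.sum_le_sum hmono
  omega
/-- **Pathak–Sönmez 2008.** Let `N` be the sincere students. In the tiered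
economy (students keep their preferences; each college ranks students first by
tier — lower tier number is better — then by its original ranking within a tier,
keeping the same set of acceptable students), any two stable matchings assign
every sincere student to the same college; equivalently (via Pathak–Sönmez
2013), sincere students receive the same college in every Nash equilibrium of
the Boston mechanism game. -/
theorem stmt15 (N : Finset S) (P P' : MPrefs S C) (q : C → ℕ)
    (hsame : ∀ s x, P'.prS s x = P.prS s x)
    (htier : ∀ c (s s' : S), tier N P s c < tier N P s' c →
      P'.prC c (some s') < P'.prC c (some s))
    (hwithin : ∀ c (s s' : S), tier N P s c = tier N P s' c →
      (P'.prC c (some s') < P'.prC c (some s) ↔ P.prC c (some s') < P.prC c (some s)))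
    (hacc : ∀ c (s : S), P'.prC c none < P'.prC c (some s) ↔ P.prC c none < P.prC c (some s))
    (μ μ' : S → Option C)
    (hμ : MStable P' q μ) (hμ' : MStable P' q μ') :
    ∀ s ∈ N, μ s = μ' s := by
  classical
  intro s₀ hs₀
  by_contra hne0
  set Bad : Finset S := univ.filter (fun s => s ∈ N ∧ μ s ≠ μ' s) with hBad
  have hBne : Bad.Nonempty := ⟨s₀, by rw [hBad, mem_filter]; exact ⟨mem_univ _, hs₀, hne0⟩⟩
  set v : S → ℕ := fun s =>
    if P.prS s (μ' s) < P.prS s (μ s) then (μ s).elim 0 (rankOf P s)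
    else (μ' s).elim 0 (rankOf P s) with hv
  obtain ⟨i, hiB, hminv⟩ := Finset.exists_min_image Bad v hBne
  rw [hBad, mem_filter] at hiB
  obtain ⟨-, hiN, hine⟩ := hiB
  have hneq : P.prS i (μ i) ≠ P.prS i (μ' i) := fun h => hine (P.injS i h)
  rcases lt_or_gt_of_ne hneq with hlt | hgt
  · -- μ' i strictly preferred by i : apply psKey with roles (μ', μ)
    obtain ⟨c, hc⟩ : ∃ c, μ' i = some c := by
      cases h' : μ' i with
      | none =>
        exfalso
        cases h : μ i with
        | none => exact hine (h.trans h'.symm)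
        | some c0 =>
          have hir := (hμ.1.1 i c0 h).1
          rw [hsame, hsame] at hir
          rw [h, h'] at hlt
          exact lt_asymm hir hlt
      | some c0 => exact ⟨c0, rfl⟩
    have hprefi : P.prS i (μ i) < P.prS i (some c) := by rw [← hc]; exact hlt
    refine psKey N P P' q hsame htier μ' μ hμ' hμ i hiN c hc hprefi ?_
    intro j hjN c' hj
    have hjne : μ j ≠ μ' j := by
      rcases hj with ⟨h1, h2⟩ | ⟨h1, h2⟩
      · intro he; rw [he, h1] at h2; exact lt_irrefl _ h2
      · intro he; rw [← he, h1] at h2; exact lt_irrefl _ h2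
    have hjB : j ∈ Bad := by rw [hBad, mem_filter]; exact ⟨mem_univ _, hjN, hjne⟩
    have hvj : v j = rankOf P j c' := by
      rcases hj with ⟨h1, h2⟩ | ⟨h1, h2⟩
      · -- μ' j = some c' and j prefers c' to μ j
        have hcond : ¬ P.prS j (μ' j) < P.prS j (μ j) := by
          rw [h1]; exact fun h => lt_asymm h2 h
        simp only [hv]; rw [if_neg hcond, h1]; rfl
      · -- μ j = some c' and j prefers c' to μ' j
        have hcond : P.prS j (μ' j) < P.prS j (μ j) := by rw [h1]; exact h2
        simp only [hv]; rw [if_pos hcond, h1]; rfl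
    have hvi : v i = rankOf P i c := by
      have hcond : ¬ P.prS i (μ' i) < P.prS i (μ i) := fun h => lt_asymm hlt h
      simp only [hv]; rw [if_neg hcond, hc]; rfl
    rw [← hvi, ← hvj]
    exact hminv j hjB
  · -- μ i strictly preferred by i : apply psKey with roles (μ, μ')
    obtain ⟨c, hc⟩ : ∃ c, μ i = some c := by
      cases h' : μ i with
      | none =>
        exfalso
        cases h : μ' i with
        | none => exact hine (h'.trans h.symm)
        | some c0 =>
          have hir := (hμ'.1.1 i c0 h).1
          rw [hsame, hsame] at hir
          rw [h, h'] at hgt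
          exact lt_asymm hir hgt
      | some c0 => exact ⟨c0, rfl⟩
    have hprefi : P.prS i (μ' i) < P.prS i (some c) := by rw [← hc]; exact hgt
    refine psKey N P P' q hsame htier μ μ' hμ hμ' i hiN c hc hprefi ?_
    intro j hjN c' hj
    have hjne : μ j ≠ μ' j := by
      rcases hj with ⟨h1, h2⟩ | ⟨h1, h2⟩
      · intro he; rw [← he, h1] at h2; exact lt_irrefl _ h2
      · intro he; rw [he, h1] at h2; exact lt_irrefl _ h2
    have hjB : j ∈ Bad := by rw [hBad, mem_filter]; exact ⟨mem_univ _, hjN, hjne⟩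
    have hvj : v j = rankOf P j c' := by
      rcases hj with ⟨h1, h2⟩ | ⟨h1, h2⟩
      · -- μ j = some c' and j prefers c' to μ' j
        have hcond : P.prS j (μ' j) < P.prS j (μ j) := by rw [h1]; exact h2
        simp only [hv]; rw [if_pos hcond, h1]; rfl
      · -- μ' j = some c' and j prefers c' to μ j
        have hcond : ¬ P.prS j (μ' j) < P.prS j (μ j) := by
          rw [h1]; exact fun h => lt_asymm h2 h
        simp only [hv]; rw [if_neg hcond, h1]; rfl
    have hvi : v i = rankOf P i c := by
      have hcond : P.prS i (μ' i) < P.prS i (μ i) := hgt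
      simp only [hv]; rw [if_pos hcond, hc]; rfl
    rw [← hvi, ← hvj]
    exact hminv j hjB
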